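/- arXiv:2212.00060 — 9 statements merged into one kernel-verified Lean document; each statement's English description precedes it below -/
import Mathlib

section
/- Let s ≥ 1 be an integer and A a finite alphabet with |A| ≥ 2. If a code C ⊆ A^{s+2} is 1-error correctable for the network N_s, then the minimum Hamming distance of C satisfies d(C) ≥ 3, i.e., any two distinct codewords of C differ in at least 3 coordinates. -/
open Finset

/-- The "fan" of a codeword `c` under the network code `(F1, F2)` for the network `N_s`:
the set of possible outputs at the terminal when the adversary changes at most one
of the `s+2` symbols sent by the source. -/
def fan {A : Type*} [Fintype A] [DecidableEq A] (s : ℕ)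
    (F1 : A → A) (F2 : (Fin (s + 1) → A) → Fin s → A)
    (c : Fin (s + 2) → A) : Finset (A × (Fin s → A)) :=
  (Finset.univ.filter fun x : Fin (s + 2) → A => hammingDist x c ≤ 1).image
    fun x => (F1 (x 0), F2 fun i => x i.succ)

/-- A code `C ⊆ A^{s+2}` is 1-error correctable for the network `N_s` if there are
functions `F1 : A → A` and `F2 : A^{s+1} → A^s` such that the fans of distinct
codewords are disjoint. -/
def OneErrCorr {A : Type*} [Fintype A] [DecidableEq A] (s : ℕ)
    (C : Finset (Fin (s + 2) → A)) : Prop :=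
  ∃ (F1 : A → A) (F2 : (Fin (s + 1) → A) → Fin s → A),
    ∀ c ∈ C, ∀ c' ∈ C, c ≠ c' → Disjoint (fan s F1 F2 c) (fan s F1 F2 c')

/-- `tau s C c2` is the set of codewords of `C` whose last `s+1` coordinates are at
Hamming distance at most 1 from `c2`. -/
def tau {A : Type*} [Fintype A] [DecidableEq A] (s : ℕ)
    (C : Finset (Fin (s + 2) → A)) (c2 : Fin (s + 1) → A) :
    Finset (Fin (s + 2) → A) :=
  C.filter fun c => hammingDist c2 (fun i => c i.succ) ≤ 1

theorem min_distance_ge_three {A : Type*} [Fintype A] [DecidableEq A]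
    (s : ℕ) (hs : 1 ≤ s) (hA : 2 ≤ Fintype.card A)
    (C : Finset (Fin (s + 2) → A)) (hC : OneErrCorr s C) :
    ∀ c ∈ C, ∀ c' ∈ C, c ≠ c' → 3 ≤ hammingDist c c' := by
  obtain ⟨F1, F2, hdisj⟩ := hC
  intro c hc c' hc' hne
  by_contra h
  push_neg at h
  have hd : hammingDist c c' ≤ 2 := by omega
  have hpos : 0 < hammingDist c c' := hammingDist_pos.mpr hne
  obtain ⟨i0, hi0⟩ : ∃ i, c i ≠ c' i := Function.ne_iff.mp hne
  let x : Fin (s + 2) → A := Function.update c i0 (c' i0)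
  have hxi0 : x i0 = c' i0 := Function.update_self _ _ _
  have hxne : ∀ j, j ≠ i0 → x j = c j := fun j hj => Function.update_of_ne hj _ _
  have h1 : hammingDist x c ≤ 1 := by
    have hsub : ({i | x i ≠ c i} : Finset _) ⊆ {i0} := by
      intro j hj
      simp only [Finset.mem_filter, Finset.mem_singleton] at hj ⊢
      by_contra hji
      exact hj.2 (hxne j hji)
    simpa [hammingDist] using Finset.card_le_card hsub
  have h2 : hammingDist x c' ≤ 1 := by
    have hsub : ({j | x j ≠ c' j} : Finset _) ⊆ ({j | c j ≠ c' j} : Finset _) \ {i0} := by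
      intro j hj
      simp only [Finset.mem_filter, Finset.mem_sdiff, Finset.mem_singleton,
        Finset.mem_univ, true_and] at hj ⊢
      rcases eq_or_ne j i0 with rfl | hne'
      · exact absurd hxi0 hj
      · rw [hxne j hne'] at hj
        exact ⟨hj, hne'⟩
    have hle := Finset.card_le_card hsub
    rw [Finset.card_sdiff_of_subset (by simp [hi0])] at hle
    simp only [Finset.card_singleton] at hle
    have : hammingDist x c' ≤ hammingDist c c' - 1 := by
      simpa [hammingDist] using hle
    omega
  have hmem : ∀ (w : Fin (s + 2) → A), hammingDist x w ≤ 1 →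
      (F1 (x 0), F2 fun i => x i.succ) ∈ fan s F1 F2 w := by
    intro w hw
    exact Finset.mem_image.mpr ⟨x, Finset.mem_filter.mpr ⟨Finset.mem_univ _, hw⟩, rfl⟩
  exact Finset.disjoint_left.mp (hdisj c hc c' hc' hne) (hmem c h1) (hmem c' h2)
end

section
/- Let s ≥ 1 be an integer, A a finite alphabet with |A| ≥ 2, and C ⊆ A^{s+2} a code that is 1-error correctable for the network N_s. Then for every c_2 ∈ A^{s+1} one has |τ(c_2)| ≤ min(|A|, s+1). -/
open Finset

/-!
Disjointness of fans means two distinct codewords never have a common word within Hamming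
distance one. Hence two codewords of `τ(c₂)` cannot share their first symbol `a` (the word
`(a, c₂)` would be such a common neighbour), which bounds `|τ(c₂)|` by `|A|`; and their tails
are at distance at least two, while all lying within distance one of `c₂`. Such tails differ
from `c₂` in exactly one coordinate each, and in pairwise distinct coordinates, which bounds
`|τ(c₂)|` by `s + 1`.
-/

lemma hammingDist_cons {A : Type*} [DecidableEq A] {n : ℕ} (a b : A) (u v : Fin n → A) :
    hammingDist (Fin.cons a u : Fin (n + 1) → A) (Fin.cons b v) =
      (if a = b then 0 else 1) + hammingDist u v := by
  simp only [hammingDist, card_filter, Fin.sum_univ_succ, Fin.cons_zero, Fin.cons_succ]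
  by_cases h : a = b <;> simp [h]

lemma hammingDist_le_of_filter_ne_eq {ι β : Type*} [Fintype ι] [DecidableEq β] {v x y : ι → β}
    (h : univ.filter (fun i => v i ≠ x i) = univ.filter fun i => v i ≠ y i) :
    hammingDist x y ≤ hammingDist v x := by
  refine card_le_card fun i hi => ?_
  have hxy : x i ≠ y i := (mem_filter.1 hi).2
  by_contra hvx
  have hvx' : v i = x i := by simpa using hvx
  have hvy : i ∈ univ.filter fun i => v i ≠ y i := by simpa [hvx'] using hxy
  exact hvx (h ▸ hvy)

lemma card_le_of_hammingDist_le_one_of_pairwise_one_lt {α ι β : Type*} [Fintype ι] [Nonempty ι]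
    [DecidableEq β] {T : Finset α} (f : α → ι → β) (v : ι → β)
    (hclose : ∀ a ∈ T, hammingDist v (f a) ≤ 1)
    (hsep : ∀ a ∈ T, ∀ b ∈ T, a ≠ b → 1 < hammingDist (f a) (f b)) :
    T.card ≤ Fintype.card ι := by
  by_cases hcentre : ∃ a ∈ T, f a = v
  · obtain ⟨a, ha, hfa⟩ := hcentre
    have hT : T ⊆ {a} := fun b hb => mem_singleton.2 <| by
      by_contra hba
      have := hsep a ha b hb (Ne.symm hba)
      have := hclose b hb
      rw [hfa] at *
      omega
    exact (card_le_card hT).trans (card_singleton a ▸ Fintype.card_pos)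
  simp only [not_exists, not_and] at hcentre
  have hdist : ∀ a ∈ T, hammingDist v (f a) = 1 := fun a ha =>
    le_antisymm (hclose a ha) (hammingDist_pos.2 (Ne.symm (hcentre a ha)))
  -- Each word differs from `v` in a single coordinate, and distinct words in distinct ones.
  have hinj : Set.InjOn (fun a => univ.filter fun i => v i ≠ f a i) T := by
    intro a ha b hb hab
    by_contra hne
    exact (hsep a ha b hb hne).not_ge ((hammingDist_le_of_filter_ne_eq hab).trans_eq (hdist a ha))
  calc T.card ≤ (powersetCard 1 (univ : Finset ι)).card :=
        card_le_card_of_injOn _ (fun a ha => mem_powersetCard.2 ⟨subset_univ _, hdist a ha⟩) hinj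
    _ = Fintype.card ι := by simp

lemma mem_tau {A : Type*} [Fintype A] [DecidableEq A] {s : ℕ} {C : Finset (Fin (s + 2) → A)}
    {c2 : Fin (s + 1) → A} {c : Fin (s + 2) → A} :
    c ∈ tau s C c2 ↔ c ∈ C ∧ hammingDist c2 (Fin.tail c) ≤ 1 :=
  mem_filter

namespace OneErrCorr

variable {A : Type*} [Fintype A] [DecidableEq A] {s : ℕ} {C : Finset (Fin (s + 2) → A)}

lemma eq_of_hammingDist_le_one (hC : OneErrCorr s C) {c c' x : Fin (s + 2) → A}
    (hc : c ∈ C) (hc' : c' ∈ C) (hx : hammingDist x c ≤ 1) (hx' : hammingDist x c' ≤ 1) :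
    c = c' := by
  obtain ⟨F1, F2, hdisj⟩ := hC
  by_contra hne
  have mem_fan {d : Fin (s + 2) → A} (hd : hammingDist x d ≤ 1) :
      (F1 (x 0), F2 fun i => x i.succ) ∈ fan s F1 F2 d :=
    mem_image.2 ⟨x, mem_filter.2 ⟨mem_univ x, hd⟩, rfl⟩
  exact disjoint_left.1 (hdisj c hc c' hc' hne) (mem_fan hx) (mem_fan hx')

lemma one_lt_hammingDist_tail (hC : OneErrCorr s C) {c c' : Fin (s + 2) → A}
    (hc : c ∈ C) (hc' : c' ∈ C) (hne : c ≠ c') :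
    1 < hammingDist (Fin.tail c) (Fin.tail c') := by
  by_contra! hle
  refine hne (hC.eq_of_hammingDist_le_one (x := Fin.cons (c' 0) (Fin.tail c)) hc hc' ?_ ?_)
  · rw [← Fin.cons_self_tail c, hammingDist_cons, Fin.cons_self_tail, hammingDist_self]
    split_ifs <;> simp
  · rw [← Fin.cons_self_tail c', hammingDist_cons, Fin.cons_self_tail]
    simpa using hle

lemma injOn_head_tau (hC : OneErrCorr s C) (c2 : Fin (s + 1) → A) :
    Set.InjOn (fun c => c 0) (tau s C c2 : Set (Fin (s + 2) → A)) := by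
  intro c hc c' hc' (hhead : c 0 = c' 0)
  obtain ⟨hcC, hcd⟩ := mem_tau.1 hc
  obtain ⟨hc'C, hc'd⟩ := mem_tau.1 hc'
  refine hC.eq_of_hammingDist_le_one (x := Fin.cons (c 0) c2) hcC hc'C ?_ ?_
  · rw [← Fin.cons_self_tail c, hammingDist_cons]
    simpa using hcd
  · rw [← Fin.cons_self_tail c', hammingDist_cons, hhead]
    simpa using hc'd

end OneErrCorr

theorem tau_card_le_min_general {A : Type*} [Fintype A] [DecidableEq A]
    (s : ℕ)
    (C : Finset (Fin (s + 2) → A)) (hC : OneErrCorr s C) :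
    ∀ c2 : Fin (s + 1) → A, (tau s C c2).card ≤ min (Fintype.card A) (s + 1) := by
  intro c2
  refine le_min ?_ ?_
  · exact (card_le_card_of_injOn _ (fun _ _ => mem_univ _) (hC.injOn_head_tau c2)).trans_eq
      card_univ
  · refine (card_le_of_hammingDist_le_one_of_pairwise_one_lt Fin.tail c2 (fun c hc => (mem_tau.1 hc).2)
      fun c hc c' hc' hne => ?_).trans_eq (Fintype.card_fin _)
    exact hC.one_lt_hammingDist_tail (mem_tau.1 hc).1 (mem_tau.1 hc').1 hne

theorem tau_card_le_min {A : Type*} [Fintype A] [DecidableEq A]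
    (s : ℕ) (hs : 1 ≤ s) (hA : 2 ≤ Fintype.card A)
    (C : Finset (Fin (s + 2) → A)) (hC : OneErrCorr s C) :
    ∀ c2 : Fin (s + 1) → A, (tau s C c2).card ≤ min (Fintype.card A) (s + 1) :=
  tau_card_le_min_general s C hC
end

section
/- Let s ≥ 1 be an integer, A a finite alphabet with |A| ≥ 2, C ⊆ A^{s+2} a code, and F1 : A → A, F2 : A^{s+1} → A^s functions such that the fans Fan(c) and Fan(c') are disjoint for all distinct c, c' ∈ C. Then for any two distinct elements c_2, c_2' ∈ A^{s+1} with F2(c_2) = F2(c_2'), the set τ(c_2) ∪ τ(c_2') does not contain two distinct codewords with the same first coordinate. -/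
open Finset

lemma hammingDist_fin_cons {A : Type*} [DecidableEq A] {n : ℕ} (a : A) (u v : Fin n → A) :
    hammingDist (Fin.cons a u : Fin (n+1) → A) (Fin.cons a v) = hammingDist u v := by
  unfold hammingDist
  rw [Fin.univ_succ, filter_cons, if_neg (by simp), filter_map, card_map]
  simp [Function.comp_def]

lemma mem_fan_of_mem_tau {A : Type*} [Fintype A] [DecidableEq A] {s : ℕ}
    {F1 : A → A} {F2 : (Fin (s + 1) → A) → Fin s → A}
    {C : Finset (Fin (s + 2) → A)} {b : Fin (s + 1) → A} {x : Fin (s + 2) → A}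
    (hx : x ∈ tau s C b) : (F1 (x 0), F2 b) ∈ fan s F1 F2 x := by
  rw [tau, mem_filter] at hx
  rw [fan, mem_image]
  refine ⟨Fin.cons (x 0) b, ?_, by simp⟩
  rw [mem_filter]
  refine ⟨mem_univ _, ?_⟩
  calc hammingDist (Fin.cons (x 0) b : Fin (s+2) → A) x
      = hammingDist (Fin.cons (x 0) b : Fin (s+2) → A)
        (Fin.cons (x 0) (fun i => x i.succ)) := by
        congr 1; ext i; exact (Fin.cons_self_tail x).symm ▸ rfl
    _ = hammingDist b (fun i => x i.succ) := hammingDist_fin_cons _ _ _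
    _ ≤ 1 := hx.2

theorem disjoint_first_coordinates {A : Type*} [Fintype A] [DecidableEq A]
    (s : ℕ) (hs : 1 ≤ s) (hA : 2 ≤ Fintype.card A)
    (C : Finset (Fin (s + 2) → A))
    (F1 : A → A) (F2 : (Fin (s + 1) → A) → Fin s → A)
    (hF : ∀ c ∈ C, ∀ c' ∈ C, c ≠ c' → Disjoint (fan s F1 F2 c) (fan s F1 F2 c'))
    (c2 c2' : Fin (s + 1) → A) (hne : c2 ≠ c2') (hF2 : F2 c2 = F2 c2') :
    ∀ x ∈ tau s C c2 ∪ tau s C c2', ∀ y ∈ tau s C c2 ∪ tau s C c2',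
      x ≠ y → x 0 ≠ y 0 := by
  intro x hx y hy hxy h0
  rw [mem_union] at hx hy
  have hxC : x ∈ C := by rcases hx with h | h <;> exact (mem_filter.mp h).1
  have hyC : y ∈ C := by rcases hy with h | h <;> exact (mem_filter.mp h).1
  have hxf : (F1 (x 0), F2 c2) ∈ fan s F1 F2 x := by
    rcases hx with h | h
    · exact mem_fan_of_mem_tau h
    · exact hF2 ▸ mem_fan_of_mem_tau h
  have hyf : (F1 (x 0), F2 c2) ∈ fan s F1 F2 y := by
    rw [h0]
    rcases hy with h | h
    · exact mem_fan_of_mem_tau h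
    · exact hF2 ▸ mem_fan_of_mem_tau h
  exact Finset.disjoint_left.mp (hF x hxC y hyC hxy) hxf hyf
end

section
/- Let s ≥ 1 be an integer, A a finite alphabet with |A| ≥ 2, C ⊆ A^{s+2} a code, and F1 : A → A, F2 : A^{s+1} → A^s functions such that the fans Fan(c) and Fan(c') are disjoint for all distinct c, c' ∈ C. Let c = (c_1, c_2) ∈ C be a codeword and c' = (c_1', c_2') ∈ A^{s+2} an element of C̄ := {x ∈ A^{s+2} : ∃ c'' ∈ C, d_H(x, c'') ≤ 1} with c ≠ c' and F2(c_2) = F2(c_2'). Then τ(c_2') = {c}. -/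
open Finset

lemma ham_decomp {A : Type*} [DecidableEq A] {n : ℕ} (f g : Fin (n+1) → A) :
    hammingDist f g = (if f 0 = g 0 then 0 else 1)
      + hammingDist (fun i : Fin n => f i.succ) (fun i : Fin n => g i.succ) := by
  unfold hammingDist
  rw [Finset.card_filter, Fin.sum_univ_succ, Finset.card_filter]
  simp [ite_not]

lemma ham_tail_le {A : Type*} [DecidableEq A] {n : ℕ} (f g : Fin (n+1) → A) :
    hammingDist (fun i : Fin n => f i.succ) (fun i : Fin n => g i.succ) ≤ hammingDist f g := by
  rw [ham_decomp f g]; omega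

theorem tau_eq_singleton {A : Type*} [Fintype A] [DecidableEq A]
    (s : ℕ) (hs : 1 ≤ s) (hA : 2 ≤ Fintype.card A)
    (C : Finset (Fin (s + 2) → A))
    (F1 : A → A) (F2 : (Fin (s + 1) → A) → Fin s → A)
    (hF : ∀ c ∈ C, ∀ c' ∈ C, c ≠ c' → Disjoint (fan s F1 F2 c) (fan s F1 F2 c'))
    (c : Fin (s + 2) → A) (hc : c ∈ C)
    (c' : Fin (s + 2) → A) (hc' : ∃ c'' ∈ C, hammingDist c' c'' ≤ 1)
    (hne : c ≠ c')
    (hF2 : F2 (fun i => c i.succ) = F2 (fun i => c' i.succ)) :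
    tau s C (fun i => c' i.succ) = {c} := by
  classical
  have mem_fan : ∀ (d x : Fin (s+2) → A), hammingDist x d ≤ 1 →
      (F1 (x 0), F2 fun i : Fin (s+1) => x i.succ) ∈ fan s F1 F2 d := by
    intro d x hx
    exact Finset.mem_image.2 ⟨x, Finset.mem_filter.2 ⟨Finset.mem_univ _, hx⟩, rfl⟩
  have key : ∀ d ∈ C, ∀ z : A × (Fin s → A),
      z ∈ fan s F1 F2 c → z ∈ fan s F1 F2 d → d = c := by
    intro d hd z h1 h2
    by_contra hdc
    exact Finset.disjoint_left.mp (hF c hc d hd (Ne.symm hdc)) h1 h2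
  have hcc : ∀ d ∈ C,
      hammingDist (fun i : Fin (s+1) => c' i.succ) (fun i : Fin (s+1) => d i.succ) ≤ 1 →
      d = c := by
    intro d hd hdist
    apply key d hd (F1 (d 0), F2 fun i : Fin (s+1) => c' i.succ)
    · rw [← hF2]
      have h := mem_fan c (Fin.cons (d 0) (fun i : Fin (s+1) => c i.succ)) (by
        rw [ham_decomp]
        simp only [Fin.cons_zero, Fin.cons_succ]
        rw [hammingDist_self]
        split_ifs <;> omega)
      simpa using h
    · have h := mem_fan d (Fin.cons (d 0) (fun i : Fin (s+1) => c' i.succ)) (by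
        rw [ham_decomp]
        simp only [Fin.cons_zero, Fin.cons_succ]
        simpa using hdist)
      simpa using h
  obtain ⟨c'', hc''C, hd1⟩ := hc'
  have hceq : c'' = c := hcc c'' hc''C (le_trans (ham_tail_le c' c'') hd1)
  subst hceq
  ext d
  simp only [tau, Finset.mem_filter, Finset.mem_singleton]
  constructor
  · rintro ⟨hdC, hdist⟩
    exact hcc d hdC hdist
  · rintro rfl
    exact ⟨hc, le_trans (ham_tail_le c' d) hd1⟩
end

section
/- Let s ≥ 1 be an integer and A a finite alphabet with |A| ≥ 2. If a code C ⊆ A^{s+2} is 1-error correctable for the network N_s, then |C| ≤ |A|^s. -/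
open Finset

theorem card_le_pow {A : Type*} [Fintype A] [DecidableEq A]
    (s : ℕ) (hs : 1 ≤ s) (hA : 2 ≤ Fintype.card A)
    (C : Finset (Fin (s + 2) → A)) (hC : OneErrCorr s C) :
    C.card ≤ Fintype.card A ^ s := by
  obtain ⟨F1, F2, hdis⟩ := hC
  have hinj : Set.InjOn (fun c : Fin (s + 2) → A => F2 fun i => c i.succ) C := by
    intro c hc c' hc' heq
    by_contra hne
    refine Finset.not_disjoint_iff.mpr ?_ (hdis c hc c' hc' hne)
    refine ⟨(F1 (c 0), F2 fun i => c i.succ), ?_, ?_⟩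
    · simp only [fan, Finset.mem_image, Finset.mem_filter, Finset.mem_univ, true_and]
      exact ⟨c, by simp [hammingDist_self], rfl⟩
    · simp only [fan, Finset.mem_image, Finset.mem_filter, Finset.mem_univ, true_and]
      refine ⟨Function.update c' 0 (c 0), ?_, ?_⟩
      · calc hammingDist (Function.update c' 0 (c 0)) c'
            = (Finset.univ.filter fun i =>
                Function.update c' 0 (c 0) i ≠ c' i).card := rfl
          _ ≤ ({0} : Finset (Fin (s + 2))).card := by
              apply Finset.card_le_card
              intro i hi
              simp only [Finset.mem_filter, Finset.mem_univ, true_and] at hi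
              simp only [Finset.mem_singleton]
              by_contra h
              exact hi (Function.update_of_ne h _ _)
          _ = 1 := rfl
      · have h1 : Function.update c' 0 (c 0) 0 = c 0 := Function.update_self _ _ _
        have h2 : (fun i : Fin (s + 1) => Function.update c' 0 (c 0) i.succ)
            = fun i => c' i.succ := by
          funext i
          exact Function.update_of_ne (Fin.succ_ne_zero i) _ _
        rw [h1, h2]
        exact congrArg _ heq.symm
  have := Finset.card_le_card_of_injOn (fun c : Fin (s + 2) → A => F2 fun i => c i.succ) (fun a _ => Finset.mem_univ _) hinj
  simpa [Fintype.card_fun] using this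
end

section
/- Let s ≥ 1 be an integer, A a finite alphabet with |A| ≥ 2, and C ⊆ A^{s+2} a code that is 1-error correctable for the network N_s. Let C_2 ⊆ A^{s+1} be the set of truncations of codewords of C to their last s+1 coordinates, and let Λ := |{(a,b) ∈ C_2 × C_2 : d_H(a,b) = 2}| be the number of ordered pairs of elements of C_2 at Hamming distance exactly 2. Then |C| + Λ/(|A|·(|A|−1)) ≤ |A|^s. -/
open Finset

section Aux
variable {A : Type*} [DecidableEq A]

lemma ham_update_le {n : ℕ} (c : Fin n → A) (i : Fin n) (a : A) :
    hammingDist (Function.update c i a) c ≤ 1 := by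
  unfold hammingDist
  refine le_trans (Finset.card_le_card ?_) (le_of_eq (Finset.card_singleton i))
  intro j hj
  simp only [Finset.mem_filter, Finset.mem_univ, true_and] at hj
  simp only [Finset.mem_singleton]
  by_contra h
  exact hj (Function.update_of_ne h a c)

lemma ham_cons {n : ℕ} (a : A) (y z : Fin n → A) :
    hammingDist (Fin.cons a y : Fin (n+1) → A) (Fin.cons a z) = hammingDist y z := by
  unfold hammingDist
  refine Finset.card_bij (fun j hj => Fin.pred j ?_) ?_ ?_ ?_
  · rintro rfl
    simp only [Finset.mem_filter, Finset.mem_univ, true_and, Fin.cons_zero] at hj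
    exact hj rfl
  · intro j hj
    simp only [Finset.mem_filter, Finset.mem_univ, true_and] at hj ⊢
    rcases Fin.eq_zero_or_eq_succ j with rfl | ⟨k, rfl⟩
    · simp only [Fin.cons_zero] at hj
      exact absurd rfl hj
    · simpa only [Fin.pred_succ, Fin.cons_succ] using hj
  · intro j1 h1 j2 h2 he
    have := congrArg Fin.succ he
    rwa [Fin.succ_pred, Fin.succ_pred] at this
  · intro b hb
    simp only [Finset.mem_filter, Finset.mem_univ, true_and] at hb
    refine ⟨b.succ, ?_, by simp⟩
    simp only [Finset.mem_filter, Finset.mem_univ, true_and, Fin.cons_succ]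
    exact hb

lemma exists_mid {n : ℕ} {a b : Fin n → A} (h : hammingDist a b = 2) :
    ∃ y : Fin n → A, hammingDist y a ≤ 1 ∧ hammingDist y b ≤ 1 := by
  have hne : (Finset.univ.filter fun i => a i ≠ b i).Nonempty := by
    rw [← Finset.card_pos]
    unfold hammingDist at h
    omega
  obtain ⟨i, hi⟩ := hne
  simp only [Finset.mem_filter, Finset.mem_univ, true_and] at hi
  refine ⟨Function.update a i (b i), ham_update_le a i (b i), ?_⟩
  unfold hammingDist at h ⊢
  have he : (Finset.univ.filter fun j => Function.update a i (b i) j ≠ b j)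
      = (Finset.univ.filter fun j => a j ≠ b j).erase i := by
    ext j
    simp only [Finset.mem_filter, Finset.mem_univ, true_and, Finset.mem_erase]
    rcases eq_or_ne j i with rfl | hji
    · simp [Function.update_self]
    · rw [Function.update_of_ne hji]
      simp [hji]
  rw [he, Finset.card_erase_of_mem (by simp [hi]), h]

end Aux

noncomputable def mid {A : Type*} [DecidableEq A] [Nonempty A] {n : ℕ} (a b : Fin n → A) : Fin n → A :=
  Classical.epsilon fun y => hammingDist y a ≤ 1 ∧ hammingDist y b ≤ 1

lemma mid_spec {A : Type*} [DecidableEq A] [Nonempty A] {n : ℕ} {a b : Fin n → A}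
    (h : hammingDist a b = 2) :
    hammingDist (mid a b) a ≤ 1 ∧ hammingDist (mid a b) b ≤ 1 :=
  Classical.epsilon_spec (exists_mid h)

noncomputable def cw {A : Type*} [DecidableEq A] [Nonempty A] {s : ℕ}
    (C : Finset (Fin (s+2) → A)) (a : Fin (s+1) → A) : Fin (s+2) → A :=
  Classical.epsilon fun c => c ∈ C ∧ (fun i : Fin (s+1) => c i.succ) = a

lemma cw_spec {A : Type*} [DecidableEq A] [Nonempty A] {s : ℕ}
    {C : Finset (Fin (s+2) → A)} {a : Fin (s+1) → A}
    (h : ∃ c ∈ C, (fun i : Fin (s+1) => c i.succ) = a) :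
    cw C a ∈ C ∧ (fun i : Fin (s+1) => cw C a i.succ) = a :=
  Classical.epsilon_spec h

theorem card_add_lambda_bound {A : Type*} [Fintype A] [DecidableEq A]
    (s : ℕ) (hs : 1 ≤ s) (hA : 2 ≤ Fintype.card A)
    (C : Finset (Fin (s + 2) → A)) (hC : OneErrCorr s C)
    (C2 : Finset (Fin (s + 1) → A))
    (hC2 : C2 = C.image fun c => fun i : Fin (s + 1) => c i.succ)
    (Λ : ℕ) (hΛ : Λ = ((C2 ×ˢ C2).filter fun p => hammingDist p.1 p.2 = 2).card) :
    (C.card : ℝ) + (Λ : ℝ) / ((Fintype.card A : ℝ) * ((Fintype.card A : ℝ) - 1))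
      ≤ (Fintype.card A : ℝ) ^ s := by
  haveI : Nonempty A := Fintype.card_pos_iff.mp (by omega)
  obtain ⟨F1, F2, hd⟩ := hC
  set q := Fintype.card A with hq
  -- basic fan membership facts
  have memfan : ∀ (c x : Fin (s + 2) → A), hammingDist x c ≤ 1 →
      (F1 (x 0), F2 fun i => x i.succ) ∈ fan s F1 F2 c := by
    intro c x h
    exact Finset.mem_image.2 ⟨x, Finset.mem_filter.2 ⟨Finset.mem_univ _, h⟩, rfl⟩
  have fanA : ∀ (c : Fin (s + 2) → A) (a : A),
      (F1 a, F2 fun i => c i.succ) ∈ fan s F1 F2 c := by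
    intro c a
    have h1 := memfan c (Function.update c 0 a) (ham_update_le c 0 a)
    have e1 : Function.update c 0 a 0 = a := Function.update_self 0 a c
    have e2 : (fun i : Fin (s + 1) => Function.update c 0 a i.succ)
        = fun i => c i.succ := by
      funext i
      exact Function.update_of_ne (Fin.succ_ne_zero i) a c
    rwa [e1, e2] at h1
  have fanB : ∀ (c : Fin (s + 2) → A) (y : Fin (s + 1) → A),
      hammingDist y (fun i => c i.succ) ≤ 1 →
      (F1 (c 0), F2 y) ∈ fan s F1 F2 c := by
    intro c y h
    have hx : hammingDist (Fin.cons (c 0) y : Fin (s + 2) → A) c ≤ 1 := by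
      calc hammingDist (Fin.cons (c 0) y : Fin (s + 2) → A) c
          = hammingDist (Fin.cons (c 0) y : Fin (s + 2) → A)
              (Fin.cons (c 0) (Fin.tail c)) := by rw [Fin.cons_self_tail]
        _ = hammingDist y (Fin.tail c) := ham_cons _ _ _
        _ ≤ 1 := h
    have h1 := memfan c (Fin.cons (c 0) y) hx
    simpa only [Fin.cons_zero, Fin.cons_succ] using h1
  have notboth : ∀ c ∈ C, ∀ c' ∈ C, c ≠ c' → ∀ e : A × (Fin s → A),
      e ∈ fan s F1 F2 c → e ∈ fan s F1 F2 c' → False := by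
    intro c hc c' hc' hne e h1 h2
    exact Finset.disjoint_left.mp (hd c hc c' hc' hne) h1 h2
  -- key consequences of disjointness
  have K2 : ∀ c ∈ C, ∀ c' ∈ C, c ≠ c' → ∀ y : Fin (s + 1) → A,
      hammingDist y (fun i => c i.succ) ≤ 1 → F2 y ≠ F2 (fun i => c' i.succ) := by
    intro c hc c' hc' hne y hy heq
    have e1 := fanB c y hy
    rw [heq] at e1
    exact notboth c hc c' hc' hne _ e1 (fanA c' (c 0))
  have K3 : ∀ c ∈ C, ∀ c' ∈ C, c ≠ c' → ∀ y y' : Fin (s + 1) → A,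
      hammingDist y (fun i => c i.succ) ≤ 1 →
      hammingDist y' (fun i => c' i.succ) ≤ 1 →
      F2 y = F2 y' → F1 (c 0) ≠ F1 (c' 0) := by
    intro c hc c' hc' hne y y' hy hy' hF2 hF1
    have e1 := fanB c y hy
    rw [hF1, hF2] at e1
    exact notboth c hc c' hc' hne _ e1 (fanB c' y' hy')
  -- truncation is injective on C
  have trinj : ∀ c ∈ C, ∀ c' ∈ C,
      (fun i : Fin (s + 1) => c i.succ) = (fun i : Fin (s + 1) => c' i.succ) →
      c = c' := by
    intro c hc c' hc' h
    by_contra hne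
    refine K2 c hc c' hc' hne (fun i => c i.succ) (by simp) ?_
    rw [h]
  -- the chosen codeword for an element of C2
  have hcw : ∀ a ∈ C2, cw C a ∈ C ∧ (fun i : Fin (s + 1) => cw C a i.succ) = a := by
    intro a ha
    rw [hC2] at ha
    obtain ⟨c, hc, hca⟩ := Finset.mem_image.mp ha
    exact cw_spec ⟨c, hc, hca⟩
  -- F2 values of distinct C2 elements differ
  have F2inj : ∀ a ∈ C2, ∀ b ∈ C2, a ≠ b → F2 a ≠ F2 b := by
    intro a ha b hb hab
    obtain ⟨hcaC, hca⟩ := hcw a ha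
    obtain ⟨hcbC, hcb⟩ := hcw b hb
    have hcc : cw C a ≠ cw C b := by
      intro h
      apply hab
      rw [← hca, ← hcb, h]
    have := K2 _ hcaC _ hcbC hcc a (by rw [hca]; simp)
    rwa [hcb] at this
  have cardC2 : C2.card = C.card := by
    rw [hC2]
    exact Finset.card_image_of_injOn fun c hc c' hc' h => trinj c hc c' hc' h
  -- the sets of values
  set P : Finset ((Fin (s + 1) → A) × (Fin (s + 1) → A)) :=
    (C2 ×ˢ C2).filter fun p => hammingDist p.1 p.2 = 2 with hP
  set φ : ((Fin (s + 1) → A) × (Fin (s + 1) → A)) → (Fin s → A) :=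
    fun p => F2 (mid p.1 p.2) with hφ
  set V : Finset (Fin s → A) := P.image φ with hV
  set W : Finset (Fin s → A) := C2.image F2 with hW
  have hPmem : ∀ p ∈ P, p.1 ∈ C2 ∧ p.2 ∈ C2 ∧ hammingDist p.1 p.2 = 2 := by
    intro p hp
    rw [hP, Finset.mem_filter, Finset.mem_product] at hp
    exact ⟨hp.1.1, hp.1.2, hp.2⟩
  -- midpoint distances
  have hmid : ∀ p ∈ P, hammingDist (mid p.1 p.2) p.1 ≤ 1 ∧
      hammingDist (mid p.1 p.2) p.2 ≤ 1 := by
    intro p hp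
    exact mid_spec (hPmem p hp).2.2
  -- the value of a midpoint is not an F2 value of C2
  have claim1 : ∀ p ∈ P, ∀ b ∈ C2, φ p ≠ F2 b := by
    intro p hp b hb
    obtain ⟨h1, h2, hd2⟩ := hPmem p hp
    obtain ⟨hc1C, hc1⟩ := hcw p.1 h1
    obtain ⟨hc2C, hc2⟩ := hcw p.2 h2
    obtain ⟨hcbC, hcb⟩ := hcw b hb
    have hne12 : p.1 ≠ p.2 := by
      intro h
      rw [h] at hd2
      simp at hd2
    by_cases hb1 : cw C b = cw C p.1
    · -- b = p.1 ; use the other side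
      have hcc : cw C p.2 ≠ cw C b := by
        intro h
        apply hne12
        rw [← hc1, ← hc2, h, hb1]
      have := K2 _ hc2C _ hcbC hcc (mid p.1 p.2) (by rw [hc2]; exact (hmid p hp).2)
      rwa [hcb] at this
    · have := K2 _ hc1C _ hcbC (fun h => hb1 h.symm) (mid p.1 p.2)
        (by rw [hc1]; exact (hmid p hp).1)
      rwa [hcb] at this
  have hVW : Disjoint V W := by
    rw [Finset.disjoint_left]
    intro v hv hw
    rw [hV, Finset.mem_image] at hv
    rw [hW, Finset.mem_image] at hw
    obtain ⟨p, hp, rfl⟩ := hv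
    obtain ⟨b, hb, hbv⟩ := hw
    exact claim1 p hp b hb hbv.symm
  have cardW : W.card = C2.card :=
    Finset.card_image_of_injOn fun a ha b hb h => by
      by_contra hne
      exact F2inj a ha b hb hne h
  -- fibers of φ are small
  have fiber : ∀ v ∈ V, (P.filter fun p => φ p = v).card ≤ q * q - q := by
    intro v hv
    have hinj : ∀ p ∈ P.filter (fun p => φ p = v),
        (F1 (cw C p.1 0), F1 (cw C p.2 0)) ∈ (Finset.univ : Finset A).offDiag := by
      intro p hp
      rw [Finset.mem_filter] at hp
      obtain ⟨h1, h2, hd2⟩ := hPmem p hp.1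
      obtain ⟨hc1C, hc1⟩ := hcw p.1 h1
      obtain ⟨hc2C, hc2⟩ := hcw p.2 h2
      have hne12 : p.1 ≠ p.2 := by
        intro h; rw [h] at hd2; simp at hd2
      have hcc : cw C p.1 ≠ cw C p.2 := by
        intro h; apply hne12; rw [← hc1, ← hc2, h]
      refine Finset.mem_offDiag.mpr ⟨Finset.mem_univ _, Finset.mem_univ _, ?_⟩
      exact K3 _ hc1C _ hc2C hcc (mid p.1 p.2) (mid p.1 p.2)
        (by rw [hc1]; exact (hmid p hp.1).1) (by rw [hc2]; exact (hmid p hp.1).2) rfl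
    have key : (P.filter fun p => φ p = v).card ≤ (Finset.univ : Finset A).offDiag.card := by
      refine Finset.card_le_card_of_injOn
        (fun p => (F1 (cw C p.1 0), F1 (cw C p.2 0))) hinj ?_
      intro p hp p' hp' he
      simp only [Finset.coe_filter, Set.mem_setOf_eq] at hp hp'
      obtain ⟨hpP, hpv⟩ := hp
      obtain ⟨hp'P, hp'v⟩ := hp'
      obtain ⟨h1, h2, hd2⟩ := hPmem p hpP
      obtain ⟨h1', h2', hd2'⟩ := hPmem p' hp'P
      obtain ⟨hc1C, hc1⟩ := hcw p.1 h1
      obtain ⟨hc2C, hc2⟩ := hcw p.2 h2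
      obtain ⟨hc1C', hc1'⟩ := hcw p'.1 h1'
      obtain ⟨hc2C', hc2'⟩ := hcw p'.2 h2'
      have hF2 : F2 (mid p.1 p.2) = F2 (mid p'.1 p'.2) := by
        rw [show F2 (mid p.1 p.2) = φ p from rfl, show F2 (mid p'.1 p'.2) = φ p' from rfl,
          hpv, hp'v]
      have hee := Prod.ext_iff.mp he
      have e1 : p.1 = p'.1 := by
        by_contra hne
        have hcc : cw C p.1 ≠ cw C p'.1 := by
          intro h; apply hne; rw [← hc1, ← hc1', h]
        exact K3 _ hc1C _ hc1C' hcc (mid p.1 p.2) (mid p'.1 p'.2)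
          (by rw [hc1]; exact (hmid p hpP).1) (by rw [hc1']; exact (hmid p' hp'P).1)
          hF2 hee.1
      have e2 : p.2 = p'.2 := by
        by_contra hne
        have hcc : cw C p.2 ≠ cw C p'.2 := by
          intro h; apply hne; rw [← hc2, ← hc2', h]
        exact K3 _ hc2C _ hc2C' hcc (mid p.1 p.2) (mid p'.1 p'.2)
          (by rw [hc2]; exact (hmid p hpP).2) (by rw [hc2']; exact (hmid p' hp'P).2)
          hF2 hee.2
      exact Prod.ext e1 e2
    calc (P.filter fun p => φ p = v).card
        ≤ (Finset.univ : Finset A).offDiag.card := key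
      _ = q * q - q := by rw [Finset.offDiag_card, Finset.card_univ]
  -- counting
  have hΛle : Λ ≤ (q * q - q) * V.card := by
    rw [hΛ]
    exact Finset.card_le_mul_card_image P (q * q - q) fiber
  have hcount : C.card + V.card ≤ q ^ s := by
    have hsub : W ∪ V ⊆ (Finset.univ : Finset (Fin s → A)) := Finset.subset_univ _
    have := Finset.card_le_card hsub
    rw [Finset.card_union_of_disjoint hVW.symm, Finset.card_univ] at this
    simp only [Fintype.card_fun, Fintype.card_fin] at this
    rw [cardW, cardC2] at this
    rw [hq]
    omega
  -- final real arithmetic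
  have hq2 : (2 : ℝ) ≤ (q : ℝ) := by exact_mod_cast hA
  have hqpos : (0 : ℝ) < (q : ℝ) * ((q : ℝ) - 1) := by nlinarith
  have step1 : (Λ : ℝ) / ((q : ℝ) * ((q : ℝ) - 1)) ≤ (V.card : ℝ) := by
    rw [div_le_iff₀ hqpos]
    have hcast : ((q * q - q : ℕ) : ℝ) = (q : ℝ) * ((q : ℝ) - 1) := by
      have hle : q ≤ q * q := Nat.le_mul_of_pos_left q (by omega)
      push_cast [Nat.cast_sub hle]
      ring
    calc (Λ : ℝ) ≤ ((q * q - q) * V.card : ℕ) := by exact_mod_cast hΛle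
      _ = (V.card : ℝ) * ((q : ℝ) * ((q : ℝ) - 1)) := by push_cast [hcast]; ring
  have step2 : (C.card : ℝ) + (V.card : ℝ) ≤ (q : ℝ) ^ s := by
    calc (C.card : ℝ) + (V.card : ℝ) = ((C.card + V.card : ℕ) : ℝ) := by push_cast; ring
      _ ≤ ((q ^ s : ℕ) : ℝ) := by exact_mod_cast hcount
      _ = (q : ℝ) ^ s := by push_cast; ring
  linarith
end

section
/- Let s ≥ 1 be an integer and A a finite alphabet with |A| = a ≥ 2. For any code D ⊆ A^{s+1} with minimum Hamming distance d(D) ≥ 2, the number Λ(D) of ordered pairs (x,y) ∈ D × D with d_H(x,y) = 2 satisfies Λ(D) ≥ |D| − a^{s−1}. -/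
open Finset

theorem lambda_lower_bound {A : Type*} [Fintype A] [DecidableEq A]
    (s a : ℕ) (hs : 1 ≤ s) (ha : Fintype.card A = a) (ha2 : 2 ≤ a)
    (D : Finset (Fin (s + 1) → A))
    (hD : ∀ x ∈ D, ∀ y ∈ D, x ≠ y → 2 ≤ hammingDist x y) :
    (D.card : ℤ) - (a : ℤ) ^ (s - 1)
      ≤ (((D ×ˢ D).filter fun p => hammingDist p.1 p.2 = 2).card : ℤ) := by
  classical
  set S := (D ×ˢ D).filter fun p => hammingDist p.1 p.2 = 2 with hS
  set pr : (Fin (s + 1) → A) → (Fin (s - 1) → A) :=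
    fun x i => x (Fin.castLE (by omega) i) with hpr
  set T := D.image pr with hT
  set fib : (Fin (s - 1) → A) → Finset (Fin (s + 1) → A) :=
    fun t => D.filter (fun x => pr x = t) with hfib
  have hsum : ∑ t ∈ T, (fib t).card = D.card :=
    (Finset.card_eq_sum_card_fiberwise (fun x hx => Finset.mem_image_of_mem pr hx)).symm
  -- each offDiag of a fiber lands in S
  have hsub : ∀ t ∈ T, (fib t).offDiag ⊆ S := by
    intro t _ p hp
    obtain ⟨hx, hy, hne⟩ := Finset.mem_offDiag.mp hp
    obtain ⟨hxD, hxt⟩ := Finset.mem_filter.mp hx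
    obtain ⟨hyD, hyt⟩ := Finset.mem_filter.mp hy
    refine Finset.mem_filter.mpr ⟨Finset.mem_product.mpr ⟨hxD, hyD⟩, ?_⟩
    have h2 : 2 ≤ hammingDist p.1 p.2 := hD _ hxD _ hyD hne
    have hle : hammingDist p.1 p.2 ≤ 2 := by
      have hsubset : (Finset.univ.filter fun i => p.1 i ≠ p.2 i) ⊆
          {(⟨s - 1, by omega⟩ : Fin (s + 1)), ⟨s, by omega⟩} := by
        intro i hi
        simp only [Finset.mem_filter, Finset.mem_univ, true_and] at hi
        by_contra hmem
        simp only [Finset.mem_insert, Finset.mem_singleton, Fin.ext_iff] at hmem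
        push_neg at hmem
        have hiv : (i : ℕ) < s - 1 := by
          have := i.isLt; omega
        have heq : p.1 i = p.2 i := by
          have h := congrFun (hxt.trans hyt.symm) ⟨(i : ℕ), hiv⟩
          simp only [hpr] at h
          have : Fin.castLE (show s - 1 ≤ s + 1 by omega) ⟨(i : ℕ), hiv⟩ = i := by
            apply Fin.ext; rfl
          rwa [this] at h
        exact hi heq
      calc hammingDist p.1 p.2
          ≤ ({(⟨s - 1, by omega⟩ : Fin (s + 1)), ⟨s, by omega⟩} : Finset _).card := by
            rw [hammingDist]; exact Finset.card_le_card hsubset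
        _ ≤ 2 := (Finset.card_insert_le _ _).trans (by simp)
    omega
  have hdisj : (T : Set (Fin (s - 1) → A)).PairwiseDisjoint
      fun t => (fib t).offDiag := by
    intro t1 _ t2 _ hne12
    refine Finset.disjoint_left.mpr fun p hp1 hp2 => hne12 ?_
    obtain ⟨hx1, _, _⟩ := Finset.mem_offDiag.mp hp1
    obtain ⟨hx2, _, _⟩ := Finset.mem_offDiag.mp hp2
    have e1 := (Finset.mem_filter.mp hx1).2
    have e2 := (Finset.mem_filter.mp hx2).2
    exact e1.symm.trans e2
  have hbi : (T.biUnion fun t => (fib t).offDiag).card = ∑ t ∈ T, (fib t).offDiag.card :=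
    Finset.card_biUnion hdisj
  have hbisub : (T.biUnion fun t => (fib t).offDiag) ⊆ S :=
    Finset.biUnion_subset.mpr hsub
  have hmain : ∑ t ∈ T, (fib t).offDiag.card ≤ S.card := by
    rw [← hbi]; exact Finset.card_le_card hbisub
  have hfiber_lb : ∀ t ∈ T, (fib t).card - 1 ≤ (fib t).offDiag.card := by
    intro t ht
    obtain ⟨x, hxD, hxt⟩ := Finset.mem_image.mp ht
    have hpos : 1 ≤ (fib t).card :=
      Finset.card_pos.mpr ⟨x, Finset.mem_filter.mpr ⟨hxD, hxt⟩⟩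
    rw [Finset.offDiag_card]
    have h1 : (fib t).card - 1 ≤ (fib t).card * ((fib t).card - 1) :=
      Nat.le_mul_of_pos_left _ (by omega)
    have h2 : (fib t).card * ((fib t).card - 1)
        = (fib t).card * (fib t).card - (fib t).card := by
      rw [Nat.mul_sub, Nat.mul_one]
    omega
  have hsum_lb : ∑ t ∈ T, ((fib t).card - 1) ≤ S.card :=
    le_trans (Finset.sum_le_sum hfiber_lb) hmain
  have hTpos : ∀ t ∈ T, 1 ≤ (fib t).card := by
    intro t ht
    obtain ⟨x, hxD, hxt⟩ := Finset.mem_image.mp ht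
    exact Finset.card_pos.mpr ⟨x, Finset.mem_filter.mpr ⟨hxD, hxt⟩⟩
  have hDS : D.card ≤ S.card + T.card := by
    calc D.card = ∑ t ∈ T, (fib t).card := hsum.symm
      _ ≤ ∑ t ∈ T, ((fib t).offDiag.card + 1) := by
          refine Finset.sum_le_sum fun t ht => ?_
          have := hfiber_lb t ht
          have := hTpos t ht
          omega
      _ = (∑ t ∈ T, (fib t).offDiag.card) + T.card := by
          rw [Finset.sum_add_distrib]; simp
      _ ≤ S.card + T.card := by omega
  have hTcard : T.card ≤ a ^ (s - 1) := by
    have := Finset.card_le_univ T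
    rwa [Fintype.card_fun, Fintype.card_fin, ha] at this
  zify at hDS hTcard
  linarith
end

section
/- Let s ≥ 1 be an integer and A a finite alphabet with |A| ≥ 2. If there exists a nonempty code D ⊆ A^{s+1} with minimum Hamming distance d(D) ≥ 3, then there exists a code C ⊆ A^{s+2} of the same cardinality |C| = |D| that is 1-error correctable for the network N_s. In particular, σ(N_s, |A|) ≥ A_{|A|}(s+1, 3), the maximum size of a |A|-ary code of length s+1 with minimum Hamming distance 3. -/
open Finset

/-! Send `(d 0, d)` for `d ∈ D`. The intermediate node decodes the `s + 1` symbols it receives to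
the nearest codeword of `D` and forwards that codeword's first `s` symbols. One error moves the
received word by at most one, so decoding recovers `d` since `d(D) ≥ 3`; and because `d(D) ≥ 2`,
the first `s` symbols of `d` still determine `d`. So the fans of distinct codewords are separated
by their second components. -/

section Hamming

variable {ι β : Type*} [Fintype ι] [DecidableEq β]

theorem eq_of_hammingDist_le_one {D : Finset (ι → β)}
    (hD : ∀ x ∈ D, ∀ y ∈ D, x ≠ y → 3 ≤ hammingDist x y) {d d' y : ι → β}
    (hd : d ∈ D) (hd' : d' ∈ D) (h : hammingDist y d ≤ 1) (h' : hammingDist y d' ≤ 1) :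
    d = d' := by
  by_contra hne
  have := hD d hd d' hd' hne
  have := hammingDist_triangle_left d d' y
  omega

open Classical in
noncomputable def decodeOneError (D : Finset (ι → β)) (y : ι → β) : ι → β :=
  if h : ∃ d ∈ D, hammingDist y d ≤ 1 then h.choose else y

theorem decodeOneError_eq {D : Finset (ι → β)}
    (hD : ∀ x ∈ D, ∀ y ∈ D, x ≠ y → 3 ≤ hammingDist x y) {d y : ι → β}
    (hd : d ∈ D) (h : hammingDist y d ≤ 1) : decodeOneError D y = d := by
  have hex : ∃ d ∈ D, hammingDist y d ≤ 1 := ⟨d, hd, h⟩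
  rw [decodeOneError, dif_pos hex]
  exact eq_of_hammingDist_le_one hD hex.choose_spec.1 hd hex.choose_spec.2 h

end Hamming

section FinTailInit

variable {A : Type*} [DecidableEq A] {n : ℕ}

theorem hammingDist_tail_le (x y : Fin (n + 1) → A) :
    hammingDist (Fin.tail x) (Fin.tail y) ≤ hammingDist x y :=
  card_le_card_of_injOn Fin.succ
    (fun _ hi => by simpa [Fin.tail] using (mem_filter.1 (mem_coe.1 hi)).2)
    (Fin.succ_injective _).injOn

theorem hammingDist_le_one_of_init_eq {x y : Fin (n + 1) → A} (h : Fin.init x = Fin.init y) :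
    hammingDist x y ≤ 1 := by
  calc hammingDist x y ≤ ({Fin.last n} : Finset (Fin (n + 1))).card := by
        refine card_le_card fun i hi => ?_
        rw [mem_singleton]
        by_contra hi_last
        obtain ⟨j, rfl⟩ := Fin.exists_castSucc_eq.2 hi_last
        exact (mem_filter.1 hi).2 (congrFun h j)
    _ = 1 := card_singleton _

end FinTailInit

section Network

variable {A : Type*} [Fintype A] [DecidableEq A] {s : ℕ}

theorem snd_eq_init_of_mem_fan_cons {D : Finset (Fin (s + 1) → A)}
    (hD : ∀ x ∈ D, ∀ y ∈ D, x ≠ y → 3 ≤ hammingDist x y) (F1 : A → A) {a : A}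
    {d : Fin (s + 1) → A} (hd : d ∈ D) {p : A × (Fin s → A)}
    (hp : p ∈ fan s F1 (Fin.init ∘ decodeOneError D) (Fin.cons a d)) :
    p.2 = Fin.init d := by
  obtain ⟨x, hx, rfl⟩ := mem_image.1 hp
  have htail : hammingDist (Fin.tail x) d ≤ 1 :=
    (hammingDist_tail_le x (Fin.cons a d)).trans (mem_filter.1 hx).2
  exact congrArg Fin.init (decodeOneError_eq hD hd htail)

/-- The first symbol is a dummy: repeating `d 0` avoids having to pick an element of `A`. -/
theorem oneErrCorr_image_cons {D : Finset (Fin (s + 1) → A)}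
    (hD : ∀ x ∈ D, ∀ y ∈ D, x ≠ y → 3 ≤ hammingDist x y) :
    OneErrCorr s (D.image fun d => Fin.cons (d 0) d) := by
  refine ⟨id, Fin.init ∘ decodeOneError D, ?_⟩
  simp only [mem_image]
  rintro _ ⟨d, hd, rfl⟩ _ ⟨d', hd', rfl⟩ hne
  refine disjoint_left.2 fun p hp hp' => hne ?_
  suffices d = d' by rw [this]
  have hinit : Fin.init d = Fin.init d' :=
    (snd_eq_init_of_mem_fan_cons hD id hd hp).symm.trans
      (snd_eq_init_of_mem_fan_cons hD id hd' hp')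
  by_contra hdd'
  have := hD d hd d' hd' hdd'
  have := hammingDist_le_one_of_init_eq hinit
  omega

end Network

theorem lower_bound_from_code_general {A : Type*} [Fintype A] [DecidableEq A]
    (s : ℕ) (D : Finset (Fin (s + 1) → A))
    (hd : ∀ x ∈ D, ∀ y ∈ D, x ≠ y → 3 ≤ hammingDist x y) :
    ∃ C : Finset (Fin (s + 2) → A), C.card = D.card ∧ OneErrCorr s C :=
  ⟨_, card_image_of_injective _ fun d d' h => by simpa using congrArg Fin.tail h,
    oneErrCorr_image_cons hd⟩

theorem lower_bound_from_code {A : Type*} [Fintype A] [DecidableEq A]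
    (s : ℕ) (hs : 1 ≤ s) (hA : 2 ≤ Fintype.card A)
    (D : Finset (Fin (s + 1) → A)) (hne : D.Nonempty)
    (hd : ∀ x ∈ D, ∀ y ∈ D, x ≠ y → 3 ≤ hammingDist x y) :
    ∃ C : Finset (Fin (s + 2) → A), C.card = D.card ∧ OneErrCorr s C :=
  lower_bound_from_code_general s D hd
end

section
/- Over a 3-element alphabet A, there exists a code C ⊆ A^6 of size 35 that is 1-error correctable for the network N_4; hence σ(N_4, 3) ≥ 35. -/
open Finset

namespace SigmaHelper

def f2T : List Nat := [31, 61, 47, 31, 53, 33, 37, 30, 7, 61, 43, 57, 62, 3, 45, 57, 45, 7, 61, 2, 2, 25, 43, 27, 9, 2, 39, 61, 13, 33, 70, 74, 33, 42, 17, 74, 8, 66, 44, 8, 45, 78, 66, 17, 39, 64, 2, 22, 25, 20, 74, 22, 39, 22, 37, 24, 4, 35, 24, 74, 6, 35, 42, 44, 4, 4, 76, 53, 4, 6, 72, 57, 25, 60, 63, 25, 35, 75, 35, 18, 22, 47, 56, 0, 70, 69, 0, 67, 30, 56, 12, 21, 55, 12, 62, 12, 49, 56, 7, 9, 60, 0,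 49, 20, 38, 9, 67, 9, 77, 13, 55, 28, 73, 70, 71, 30, 0, 44, 19, 19, 70, 20, 55, 0, 72, 19, 5, 54, 19, 73, 20, 54, 9, 20, 22, 26, 60, 47, 77, 24, 23, 37, 56, 11, 26, 46, 44, 48, 16, 23, 16, 16, 16, 60, 14, 51, 75, 54, 23, 9, 46, 23, 31, 40, 0, 10, 10, 68, 58, 69, 11, 59, 21, 21, 48, 52, 68, 1, 59, 57, 5, 43, 38, 27, 68, 27, 49, 18, 27, 50, 13, 13, 71, 40, 78, 15, 50, 42, 64, 40, 55, 76, 34, 34, 58, 17, 34, 5, 50, 65, 5, 20, 68, 50, 18, 22, 26, 13, 41, 32, 53, 11, 42, 41, 11, 32, 21, 63, 32, 32, 76, 48, 46, 11, 65, 36, 29, 76, 18, 38, 18, 18, 41]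
def decT : List Nat := [0, 1, 2, 3, 4, 5, 6, 7, 8, 9, 10, 11, 12, 13, 14, 15, 16, 17, 18, 19, 20, 21, 22, 23, 24, 25, 26, 27, 28, 29, 30, 31, 32, 33, 34, 6, 18, 6, 23, 17, 10, 18, 6, 2, 4, 17, 18, 0, 32, 9, 5, 23, 10, 10, 23, 0, 0, 4, 0, 0, 2, 2, 0, 4, 5, 5, 17, 9, 10, 10, 33, 0, 17, 0, 33, 23, 32, 0, 33, 0, 0, 0, 1, 2, 3, 4, 5, 6, 7, 8, 9, 10, 11, 12, 13, 14, 15, 16, 17, 18, 19, 20, 21, 22, 23, 24, 25, 26, 27, 28, 29, 30, 31, 32, 33, 34, 25, 14, 31, 27, 22, 13, 11, 11, 3, 19, 3, 14, 31, 1, 1, 13, 14, 3, 3, 14, 19, 30, 1, 1, 1, 14, 31, 3, 0, 0, 0, 0, 30, 27, 30, 28, 28, 0, 28, 22, 25, 25, 28, 0, 0, 0, 0, 1, 2, 3, 4, 5, 6, 7, 8, 9, 10, 11, 12, 13, 14, 15, 16, 17, 18, 19, 20, 21, 22, 23, 24, 25, 26, 27, 28, 29, 30, 31, 32, 33, 34,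 24, 29, 26, 29, 7, 21, 29, 15, 21, 8, 7, 16, 26, 12, 12, 15, 29, 21, 24, 20, 34, 16, 7, 15, 21, 26, 8, 12, 29, 8, 29, 8, 0, 34, 0, 12, 15, 16, 20, 24, 0, 34, 26, 34, 0, 0]
def cwT : List Nat := [249, 532, 57, 40, 195, 621, 180, 53, 110, 315, 498, 673, 281, 571, 463, 587, 455, 129, 723, 358, 392, 518, 160, 474, 176, 226, 407, 556, 334, 710, 265, 1, 684, 96, 611]

def dig (n k : ℕ) : Fin 3 := ⟨n / 3 ^ k % 3, Nat.mod_lt _ (by norm_num)⟩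

/-- The 35 codewords, as functions `Fin 6 → Fin 3`. -/
def cw (i : Fin 35) : Fin 6 → Fin 3 := fun k => dig (cwT.getD i.val 0) k.val

def idx5 (v : Fin 5 → Fin 3) : ℕ :=
  (v 0).val + 3 * (v 1).val + 9 * (v 2).val + 27 * (v 3).val + 81 * (v 4).val

def idx4 (v : Fin 4 → Fin 3) : ℕ :=
  (v 0).val + 3 * (v 1).val + 9 * (v 2).val + 27 * (v 3).val

/-- The inner encoding function `F2 : A^5 → A^4`. -/
def F2c (v : Fin 5 → Fin 3) : Fin 4 → Fin 3 := fun j => dig (f2T.getD (idx5 v) 0) j.val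

/-- The decoder. -/
def Dec (y1 : Fin 3) (y2 : Fin 4 → Fin 3) : Fin 6 → Fin 3 :=
  cw ⟨decT.getD (y1.val * 81 + idx4 y2) 0 % 35, Nat.mod_lt _ (by norm_num)⟩

lemma key : ∀ (ci : Fin 35) (i : Fin 6) (a : Fin 3),
    Dec (Function.update (cw ci) i a 0)
      (F2c fun j => Function.update (cw ci) i a j.succ) = cw ci := by decide

lemma cw_inj : Function.Injective cw := by decide

lemma mem_ball {n : ℕ} {β : Type*} [DecidableEq β] {x c : Fin (n + 1) → β}
    (h : hammingDist x c ≤ 1) : ∃ (i : Fin (n + 1)) (a : β), x = Function.update c i a := by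
  by_cases hxc : x = c
  · exact ⟨0, c 0, by rw [hxc, Function.update_eq_self]⟩
  · obtain ⟨i, hi⟩ := Function.ne_iff.mp hxc
    refine ⟨i, x i, funext fun j => ?_⟩
    rcases eq_or_ne j i with rfl | hj
    · rw [Function.update_self]
    · have hcard : ({k | x k ≠ c k} : Finset _).card ≤ 1 := h
      have hjmem : j ∉ ({k | x k ≠ c k} : Finset _) := by
        intro hjm
        exact hj (Finset.card_le_one.mp hcard _ hjm _ (by simp [hi]))
      have hxj : x j = c j := by simpa using hjmem
      rw [Function.update_of_ne hj, hxj]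

end SigmaHelper

open SigmaHelper in
theorem sigma_N4_3_ge_thirtyfive :
    ∀ (A : Type) [Fintype A] [DecidableEq A], Fintype.card A = 3 →
      ∃ C : Finset (Fin 6 → A), C.card = 35 ∧ OneErrCorr 4 C := by
  intro A _ _ hcard
  have e : A ≃ Fin 3 := Fintype.equivFinOfCardEq hcard
  set cwA : Fin 35 → (Fin 6 → A) := fun i k => e.symm (cw i k) with hcwA
  have hinj : Function.Injective cwA := by
    intro i j hij
    apply cw_inj
    funext k
    exact e.symm.injective (congrFun hij k)
  set F2A : (Fin 5 → A) → Fin 4 → A := fun v j => e.symm (F2c (fun k => e (v k)) j) with hF2A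
  set DecA : A × (Fin 4 → A) → (Fin 6 → A) :=
    fun y k => e.symm (Dec (e y.1) (fun j => e (y.2 j)) k) with hDecA
  refine ⟨(univ : Finset (Fin 35)).image cwA, ?_, ?_⟩
  · rw [Finset.card_image_of_injective _ hinj, card_univ, Fintype.card_fin]
  · -- the decoding lemma
    have hdec : ∀ c ∈ (univ : Finset (Fin 35)).image cwA, ∀ x : Fin 6 → A,
        hammingDist x c ≤ 1 → DecA (x 0, F2A fun i => x i.succ) = c := by
      intro c hc x hx
      obtain ⟨ci, -, rfl⟩ := Finset.mem_image.mp hc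
      set x0 : Fin 6 → Fin 3 := fun k => e (x k) with hx0def
      have hcomp : (fun k => e (cwA ci k)) = cw ci := by
        funext k; simp [hcwA]
      have hx0 : hammingDist x0 (cw ci) ≤ 1 := by
        rw [← hcomp]
        calc hammingDist x0 (fun k => e (cwA ci k))
            = hammingDist x (cwA ci) :=
              hammingDist_comp (fun _ => ⇑e) (fun _ => e.injective)
          _ ≤ 1 := hx
      obtain ⟨i, a, hxe⟩ := mem_ball hx0
      have hkey := key ci i a
      rw [← hxe] at hkey
      funext k
      have h1 : e (x 0) = x0 0 := rfl
      have h2 : (fun j => e (F2A (fun i => x i.succ) j)) = F2c fun j => x0 j.succ := by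
        funext j
        simp [hF2A, hx0def]
      show e.symm (Dec (e (x 0)) (fun j => e (F2A (fun i => x i.succ) j)) k) = cwA ci k
      rw [h1, h2, hkey]
    refine ⟨id, F2A, ?_⟩
    intro c hc c' hc' hne
    rw [Finset.disjoint_left]
    intro y hy hy'
    apply hne
    have hyc : DecA y = c := by
      obtain ⟨x, hxmem, hxy⟩ := Finset.mem_image.mp hy
      have hxd : hammingDist x c ≤ 1 := (Finset.mem_filter.mp hxmem).2
      have := hdec c hc x hxd
      rwa [show (x 0, F2A fun i => x i.succ) = y from hxy] at this
    have hyc' : DecA y = c' := by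
      obtain ⟨x, hxmem, hxy⟩ := Finset.mem_image.mp hy'
      have hxd : hammingDist x c' ≤ 1 := (Finset.mem_filter.mp hxmem).2
      have := hdec c' hc' x hxd
      rwa [show (x 0, F2A fun i => x i.succ) = y from hxy] at this
    rw [← hyc, ← hyc']
end
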